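/- If g and g̃ are stationary policies with q_i^{g̃} ≤ q_i^g for all states i, then the Bᶜ-absorbing sets satisfy F(g) ⊂ F(g̃). Consequently, if g* is an optimal stationary policy, then F(g*) equals the largest absorbing set F_* := ∪_{g ∈ Π_d^s} F(g), the union over all stationary policies. -/
import Mathlib


open Finset

variable {S A : Type*}

/-- `hitLe p B n i = P_i(τ_B ≤ n)`: the probability that the Markov chain with
transition kernel `p`, started at `i`, hits the set `B` within `n` steps. -/
noncomputable def hitLe [Fintype S] [DecidableEq S] (p : S → S → ℝ) (B : Finset S) :
    ℕ → S → ℝ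
  | 0, i => if i ∈ B then 1 else 0
  | n + 1, i => if i ∈ B then 1 else ∑ j, p i j * hitLe p B n j

/-- `hitProb p B i = P_i(τ_B < ∞)`, the probability of ever hitting `B` from `i`. -/
noncomputable def hitProb [Fintype S] [DecidableEq S] (p : S → S → ℝ) (B : Finset S)
    (i : S) : ℝ :=
  ⨆ n, hitLe p B n i

/-- `F ⊂ Bᶜ` is a `Bᶜ`-closed set of the stationary policy `g`:
`p(F | i, g(i)) = 1` for every `i ∈ F`. -/
def IsBcClosed [Fintype S] (p : S → A → S → ℝ) (B : Finset S) (g : S → A)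
    (F : Finset S) : Prop :=
  (∀ i ∈ F, i ∉ B) ∧ ∀ i ∈ F, ∑ j ∈ F, p i (g i) j = 1

/-- `Fabs p B g = F(g)`, the `Bᶜ`-absorbing set of `g`: the union of all
`Bᶜ`-closed sets of `g`. -/
def Fabs [Fintype S] (p : S → A → S → ℝ) (B : Finset S) (g : S → A) : Set S :=
  {i | ∃ F, IsBcClosed p B g F ∧ i ∈ F}

/-- `FStar Acts p B = F_* = ⋃_{g} F(g)`, the union over all stationary policies. -/
def FStar [Fintype S] (Acts : S → Finset A) (p : S → A → S → ℝ) (B : Finset S) : Set S :=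
  {i | ∃ g : S → A, (∀ s, g s ∈ Acts s) ∧ i ∈ Fabs p B g}

section Aux
variable [Fintype S] [DecidableEq S]

lemma hitLe_nonneg (q : S → S → ℝ) (B : Finset S) (hq0 : ∀ i j, 0 ≤ q i j) :
    ∀ n i, 0 ≤ hitLe q B n i := by
  intro n
  induction n with
  | zero => intro i; unfold hitLe; split <;> norm_num
  | succ n ih =>
    intro i; unfold hitLe; split
    · norm_num
    · exact Finset.sum_nonneg fun j _ => mul_nonneg (hq0 i j) (ih j)

lemma hitLe_le_one (q : S → S → ℝ) (B : Finset S) (hq0 : ∀ i j, 0 ≤ q i j)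
    (hq1 : ∀ i, ∑ j, q i j = 1) : ∀ n i, hitLe q B n i ≤ 1 := by
  intro n
  induction n with
  | zero => intro i; unfold hitLe; split <;> norm_num
  | succ n ih =>
    intro i; unfold hitLe; split
    · exact le_refl 1
    · calc ∑ j, q i j * hitLe q B n j ≤ ∑ j, q i j * 1 :=
        Finset.sum_le_sum fun j _ => mul_le_mul_of_nonneg_left (ih j) (hq0 i j)
      _ = 1 := by simp [hq1 i]

lemma hitProb_nonneg (q : S → S → ℝ) (B : Finset S) (hq0 : ∀ i j, 0 ≤ q i j)
    (hq1 : ∀ i, ∑ j, q i j = 1) (i : S) : 0 ≤ hitProb q B i := by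
  have hb : BddAbove (Set.range fun n => hitLe q B n i) :=
    ⟨1, by rintro x ⟨m, rfl⟩; exact hitLe_le_one q B hq0 hq1 m i⟩
  exact le_trans (hitLe_nonneg q B hq0 0 i) (le_ciSup hb 0)

lemma hitProb_eq_zero_iff (q : S → S → ℝ) (B : Finset S) (hq0 : ∀ i j, 0 ≤ q i j)
    (hq1 : ∀ i, ∑ j, q i j = 1) (i : S) :
    hitProb q B i = 0 ↔ ∀ n, hitLe q B n i = 0 := by
  constructor
  · intro h n
    have hb : BddAbove (Set.range fun n => hitLe q B n i) :=
      ⟨1, by rintro x ⟨m, rfl⟩; exact hitLe_le_one q B hq0 hq1 m i⟩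
    have h1 : hitLe q B n i ≤ hitProb q B i := le_ciSup hb n
    have h2 := hitLe_nonneg q B hq0 n i
    rw [h] at h1
    linarith
  · intro h
    simp [hitProb, h]

/-- If `i` lies in a `Bᶜ`-closed set of `g`, the chain never hits `B`. -/
lemma closed_hitLe_zero (p : S → A → S → ℝ) (B : Finset S) (g : S → A) (F : Finset S)
    (hq0 : ∀ i j, 0 ≤ p i (g i) j) (hq1 : ∀ i, ∑ j, p i (g i) j = 1)
    (hF : IsBcClosed p B g F) :
    ∀ n, ∀ i ∈ F, hitLe (fun i j => p i (g i) j) B n i = 0 := by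
  obtain ⟨hFB, hFc⟩ := hF
  -- transitions from i ∈ F to j ∉ F are zero
  have hzero : ∀ i ∈ F, ∀ j, j ∉ F → p i (g i) j = 0 := by
    intro i hi
    have hsplit : ∑ j ∈ F, p i (g i) j + ∑ j ∈ Fᶜ, p i (g i) j = ∑ j, p i (g i) j :=
      Finset.sum_add_sum_compl F _
    rw [hq1 i, hFc i hi] at hsplit
    have hzsum : ∑ j ∈ Fᶜ, p i (g i) j = 0 := by linarith
    intro j hj
    have := (Finset.sum_eq_zero_iff_of_nonneg (fun j _ => hq0 i j)).mp hzsum j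
      (Finset.mem_compl.mpr hj)
    exact this
  intro n
  induction n with
  | zero =>
    intro i hi
    unfold hitLe
    simp [hFB i hi]
  | succ n ih =>
    intro i hi
    unfold hitLe
    rw [if_neg (hFB i hi)]
    apply Finset.sum_eq_zero
    intro j _
    by_cases hj : j ∈ F
    · rw [ih j hj, mul_zero]
    · rw [hzero i hi j hj, zero_mul]

/-- The set of states with zero hitting probability is `Bᶜ`-closed. -/
lemma zeroSet_closed (p : S → A → S → ℝ) (B : Finset S) (g : S → A)
    (hq0 : ∀ i j, 0 ≤ p i (g i) j) (hq1 : ∀ i, ∑ j, p i (g i) j = 1) :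
    IsBcClosed p B g (Finset.univ.filter
      fun i => hitProb (fun i j => p i (g i) j) B i = 0) := by
  classical
  set q : S → S → ℝ := fun i j => p i (g i) j with hq
  set F0 := Finset.univ.filter fun i => hitProb q B i = 0 with hF0
  have hmem : ∀ i, i ∈ F0 ↔ hitProb q B i = 0 := by
    intro i; simp [hF0]
  constructor
  · intro i hi hiB
    have h0 : ∀ n, hitLe q B n i = 0 :=
      (hitProb_eq_zero_iff q B hq0 hq1 i).mp ((hmem i).mp hi)
    have := h0 0
    unfold hitLe at this
    rw [if_pos hiB] at this
    norm_num at this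
  · intro i hi
    have h0 : ∀ n, hitLe q B n i = 0 :=
      (hitProb_eq_zero_iff q B hq0 hq1 i).mp ((hmem i).mp hi)
    have hiB : i ∉ B := by
      intro hiB
      have := h0 0
      unfold hitLe at this
      rw [if_pos hiB] at this
      norm_num at this
    -- transitions from i to states outside F0 vanish
    have hzero : ∀ j, j ∉ F0 → q i j = 0 := by
      intro j hj
      have hjpos : ∃ n, hitLe q B n j ≠ 0 := by
        by_contra hcon
        push_neg at hcon
        exact hj ((hmem j).mpr ((hitProb_eq_zero_iff q B hq0 hq1 j).mpr hcon))
      obtain ⟨n, hn⟩ := hjpos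
      have hsum0 : ∑ k, q i k * hitLe q B n k = 0 := by
        have := h0 (n + 1)
        unfold hitLe at this
        rwa [if_neg hiB] at this
      have hterm : q i j * hitLe q B n j = 0 :=
        (Finset.sum_eq_zero_iff_of_nonneg
          (fun k _ => mul_nonneg (hq0 i k) (hitLe_nonneg q B hq0 n k))).mp hsum0 j
          (Finset.mem_univ j)
      rcases mul_eq_zero.mp hterm with h | h
      · exact h
      · exact absurd h hn
    have hsplit : ∑ j ∈ F0, q i j + ∑ j ∈ F0ᶜ, q i j = ∑ j, q i j :=
      Finset.sum_add_sum_compl F0 _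
    have hcz : ∑ j ∈ F0ᶜ, q i j = 0 :=
      Finset.sum_eq_zero fun j hj => hzero j (Finset.mem_compl.mp hj)
    rw [hcz, hq1 i] at hsplit
    simpa using hsplit

/-- Membership in the absorbing set is equivalent to zero hitting probability. -/
lemma mem_Fabs_iff (p : S → A → S → ℝ) (B : Finset S) (g : S → A)
    (hq0 : ∀ i j, 0 ≤ p i (g i) j) (hq1 : ∀ i, ∑ j, p i (g i) j = 1) (i : S) :
    i ∈ Fabs p B g ↔ hitProb (fun i j => p i (g i) j) B i = 0 := by
  classical
  constructor
  · rintro ⟨F, hF, hiF⟩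
    exact (hitProb_eq_zero_iff _ B hq0 hq1 i).mpr
      fun n => closed_hitLe_zero p B g F hq0 hq1 hF n i hiF
  · intro h
    exact ⟨_, zeroSet_closed p B g hq0 hq1, by simp [h]⟩

lemma Fabs_not_mem_B (p : S → A → S → ℝ) (B : Finset S) (g : S → A)
    {i : S} (hi : i ∈ Fabs p B g) : i ∉ B := by
  obtain ⟨F, hF, hiF⟩ := hi
  exact hF.1 i hiF

end Aux

theorem stmt7 [Fintype S] [DecidableEq S]
    (Acts : S → Finset A) (p : S → A → S → ℝ) (B : Finset S)
    (hp0 : ∀ i, ∀ a ∈ Acts i, ∀ j, 0 ≤ p i a j)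
    (hp1 : ∀ i, ∀ a ∈ Acts i, ∑ j, p i a j = 1) :
    (∀ g gt : S → A, (∀ i, g i ∈ Acts i) → (∀ i, gt i ∈ Acts i) →
      (∀ i, hitProb (fun i j => p i (gt i) j) B i
              ≤ hitProb (fun i j => p i (g i) j) B i) →
      Fabs p B g ⊆ Fabs p B gt)
    ∧
    ∀ gs : S → A, (∀ i, gs i ∈ Acts i) →
      (∀ g : S → A, (∀ i, g i ∈ Acts i) →
        ∀ i ∈ Bᶜ, hitProb (fun i j => p i (gs i) j) B i
                    ≤ hitProb (fun i j => p i (g i) j) B i) →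
      Fabs p B gs = FStar Acts p B := by
  have key : ∀ g : S → A, (∀ i, g i ∈ Acts i) → ∀ i : S,
      (i ∈ Fabs p B g ↔ hitProb (fun i j => p i (g i) j) B i = 0) :=
    fun g hg i => mem_Fabs_iff p B g (fun i j => hp0 i (g i) (hg i) j)
      (fun i => hp1 i (g i) (hg i)) i
  constructor
  · intro g gt hg hgt hle i hi
    have h0 : hitProb (fun i j => p i (g i) j) B i = 0 := (key g hg i).mp hi
    have hnn : 0 ≤ hitProb (fun i j => p i (gt i) j) B i :=
      hitProb_nonneg _ B (fun i j => hp0 i (gt i) (hgt i) j)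
        (fun i => hp1 i (gt i) (hgt i)) i
    have : hitProb (fun i j => p i (gt i) j) B i = 0 := le_antisymm (h0 ▸ hle i) hnn
    exact (key gt hgt i).mpr this
  · intro gs hgs hopt
    apply Set.Subset.antisymm
    · intro i hi
      exact ⟨gs, hgs, hi⟩
    · rintro i ⟨g, hg, hi⟩
      have hiB : i ∉ B := Fabs_not_mem_B p B g hi
      have h0 : hitProb (fun i j => p i (g i) j) B i = 0 := (key g hg i).mp hi
      have hle := hopt g hg i (Finset.mem_compl.mpr hiB)
      have hnn : 0 ≤ hitProb (fun i j => p i (gs i) j) B i :=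
        hitProb_nonneg _ B (fun i j => hp0 i (gs i) (hgs i) j)
          (fun i => hp1 i (gs i) (hgs i)) i
      exact (key gs hgs i).mpr (le_antisymm (h0 ▸ hle) hnn)
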